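/- Let A = A⁺ ⊕ A⁻ be a polarized associative algebra with filtration A⁽ᵐ⁾ (m ∈ ℤ) as above. Then for all m, n ∈ ℕ: A⁽ᵐ⁺ⁿ⁾ · A⁽⁻ⁿ⁻¹⁾ ⊆ A⁽ᵐ⁻¹⁾ + A⁻, where A⁽⁻¹⁾ = A⁻ is used when m = 0. -/

import Mathlib

/-!
The case `m = 0` is orthogonality: for `w ∈ A⁻` we have `⟨w, uv⟩ = ⟨wu, v⟩`, and
`wu ∈ A⁽ⁿ⁻¹⁾ + A⁻` is orthogonal to `v ∈ A⁽⁻ⁿ⁻¹⁾ ⊆ A⁻`; since `A⁻` is an isotropic complement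
of the isotropic `A⁺`, `(A⁻)⊥ = A⁻`, so `uv ∈ A⁻`.
For `m + 1`, split `uv = p + z` along `A⁺ ⊕ A⁻`. For `x ∈ A⁻`, `xu = y + z'` with
`y ∈ A⁽ᵐ⁺ⁿ⁾`, and induction on `m` puts `yv` in `A⁽ᵐ⁻¹⁾ + A⁻`; hence
`xp = yv + z'v - xz ∈ A⁽ᵐ⁻¹⁾ + A⁻`, which says `p ∈ A⁽ᵐ⁾`.
-/

namespace LinearMap.BilinForm

theorem orthogonal_le_of_codisjoint {R M : Type*} [CommSemiring R] [AddCommMonoid M]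
    [Module R M] {B : LinearMap.BilinForm R M} (hB : B.IsRefl) (hsep : LinearMap.SeparatingLeft B)
    {P N : Submodule R M} (hPN : Codisjoint P N) (hP : ∀ a ∈ P, ∀ b ∈ P, B a b = 0)
    (hN : ∀ a ∈ N, ∀ b ∈ N, B a b = 0) : B.orthogonal N ≤ N := by
  intro x hx
  obtain ⟨p, z, hp, hz, rfl⟩ := Submodule.codisjoint_iff_exists_add_eq.mp hPN x
  suffices p = 0 by simpa [this] using hz
  refine hsep p fun w => ?_
  obtain ⟨w₁, w₂, hw₁, hw₂, rfl⟩ := Submodule.codisjoint_iff_exists_add_eq.mp hPN w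
  have hw₂p : B w₂ p = 0 := by simpa [hN w₂ hw₂ z hz] using hx w₂ hw₂
  simp [hP p hp w₁ hw₁, hB _ _ hw₂p]

end LinearMap.BilinForm

namespace PolarizedFiltration

variable {F A : Type*} [CommRing F] [Ring A] [Module F A]

/-- `prevFilt N Filt m` is `A⁽ᵐ⁻¹⁾`, with `A⁽⁻¹⁾ = A⁻`. -/
def prevFilt (N : Submodule F A) (Filt : ℕ → Set A) (m : ℕ) : Set A :=
  Nat.casesOn m N Filt

variable {B : LinearMap.BilinForm F A} {P N : Submodule F A} {Filt NFilt : ℕ → Set A}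

/-- `Filt m = A⁽ᵐ⁾` and `NFilt n = A⁽⁻ⁿ⁻¹⁾` for `m n : ℕ`. -/
structure IsFiltration (B : LinearMap.BilinForm F A) (P N : Submodule F A)
    (Filt NFilt : ℕ → Set A) : Prop where
  filt_zero : Filt 0 = {u : A | u ∈ P ∧ ∀ x ∈ N, x * u ∈ N}
  filt_succ : ∀ m : ℕ, Filt (m + 1) =
    {u : A | u ∈ P ∧ ∀ x ∈ N, ∃ y ∈ Filt m, ∃ z ∈ N, x * u = y + z}
  nfilt_zero : NFilt 0 = (N : Set A)
  nfilt_succ : ∀ m : ℕ, NFilt (m + 1) = {u : A | u ∈ N ∧ ∀ y ∈ Filt m, B u y = 0}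

namespace IsFiltration

theorem mem_filt_iff (hF : IsFiltration B P N Filt NFilt) {m : ℕ} {u : A} :
    u ∈ Filt m ↔ u ∈ P ∧ ∀ x ∈ N, ∃ y ∈ prevFilt N Filt m, ∃ z ∈ N, x * u = y + z := by
  cases m with
  | zero =>
    rw [hF.filt_zero]
    refine and_congr_right fun _ => forall₂_congr fun x _ => ⟨fun h => ?_, fun h => ?_⟩
    · exact ⟨x * u, h, 0, N.zero_mem, (add_zero _).symm⟩
    · obtain ⟨y, hy, z, hz, h⟩ := h
      exact h ▸ N.add_mem hy hz
  | succ m => rw [hF.filt_succ]; rfl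

theorem nfilt_subset (hF : IsFiltration B P N Filt NFilt) (n : ℕ) : NFilt n ⊆ N := by
  cases n with
  | zero => rw [hF.nfilt_zero]
  | succ k => rw [hF.nfilt_succ]; exact fun _ hv => hv.1

theorem bilin_prevFilt_nfilt_eq_zero (hF : IsFiltration B P N Filt NFilt) (hB : B.IsRefl)
    (hNiso : ∀ a ∈ N, ∀ b ∈ N, B a b = 0) {n : ℕ} {y v : A} (hy : y ∈ prevFilt N Filt n)
    (hv : v ∈ NFilt n) : B y v = 0 := by
  cases n with
  | zero => rw [hF.nfilt_zero] at hv; exact hNiso y hy v hv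
  | succ k => rw [hF.nfilt_succ] at hv; exact hB _ _ (hv.2 y hy)

theorem mul_mem_of_mem_filt_of_mem_nfilt (hF : IsFiltration B P N Filt NFilt) (hB : B.IsRefl)
    (hsep : LinearMap.SeparatingLeft B) (hassoc : ∀ u v w : A, B (u * v) w = B u (v * w))
    (hPN : Codisjoint P N) (hPiso : ∀ a ∈ P, ∀ b ∈ P, B a b = 0)
    (hNiso : ∀ a ∈ N, ∀ b ∈ N, B a b = 0) {n : ℕ} {u v : A} (hu : u ∈ Filt n)
    (hv : v ∈ NFilt n) : u * v ∈ N := by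
  refine B.orthogonal_le_of_codisjoint hB hsep hPN hPiso hNiso fun w hw => ?_
  obtain ⟨y, hy, z, hz, hwu⟩ := (hF.mem_filt_iff.mp hu).2 w hw
  rw [← hassoc, hwu, map_add, LinearMap.add_apply,
    hF.bilin_prevFilt_nfilt_eq_zero hB hNiso hy hv, hNiso z hz v (hF.nfilt_subset n hv), add_zero]

theorem exists_mul_eq_prevFilt_add (hF : IsFiltration B P N Filt NFilt) (hB : B.IsRefl)
    (hsep : LinearMap.SeparatingLeft B) (hassoc : ∀ u v w : A, B (u * v) w = B u (v * w))
    (hPN : Codisjoint P N) (hPiso : ∀ a ∈ P, ∀ b ∈ P, B a b = 0)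
    (hNiso : ∀ a ∈ N, ∀ b ∈ N, B a b = 0) (hNmul : ∀ a ∈ N, ∀ b ∈ N, a * b ∈ N) :
    ∀ m n : ℕ, ∀ u ∈ Filt (m + n), ∀ v ∈ NFilt n,
      ∃ y ∈ prevFilt N Filt m, ∃ z ∈ N, u * v = y + z
  | 0, n, u, hu, v, hv =>
    ⟨u * v, hF.mul_mem_of_mem_filt_of_mem_nfilt hB hsep hassoc hPN hPiso hNiso
      (by rwa [Nat.zero_add] at hu) hv, 0, N.zero_mem, (add_zero _).symm⟩
  | m + 1, n, u, hu, v, hv => by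
    obtain ⟨p, z, hp, hz, hpz⟩ := Submodule.codisjoint_iff_exists_add_eq.mp hPN (u * v)
    refine ⟨p, hF.mem_filt_iff.mpr ⟨hp, fun x hx => ?_⟩, z, hz, hpz.symm⟩
    rw [Nat.add_right_comm] at hu
    obtain ⟨y₁, hy₁, z₁, hz₁, hxu⟩ := (hF.mem_filt_iff.mp hu).2 x hx
    obtain ⟨y₂, hy₂, z₂, hz₂, hyv⟩ :=
      exists_mul_eq_prevFilt_add hF hB hsep hassoc hPN hPiso hNiso hNmul m n y₁ hy₁ v hv
    have hvN : v ∈ N := hF.nfilt_subset n hv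
    refine ⟨y₂, hy₂, z₂ + z₁ * v - x * z,
      N.sub_mem (N.add_mem hz₂ (hNmul z₁ hz₁ v hvN)) (hNmul x hx z hz), ?_⟩
    calc x * p = x * u * v - x * z := by rw [eq_sub_of_add_eq hpz, mul_sub, mul_assoc]
      _ = y₂ + (z₂ + z₁ * v - x * z) := by rw [hxu, add_mul, hyv]; abel

end IsFiltration

end PolarizedFiltration

theorem polarized_filt_mul_neg
    {F : Type*} [Field F] {A : Type*} [Ring A] [Algebra F A]
    (B : LinearMap.BilinForm F A)
    (hsymm : ∀ u v : A, B u v = B v u)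
    (hassoc : ∀ u v w : A, B (u * v) w = B u (v * w))
    (hnd : ∀ u : A, (∀ v : A, B u v = 0) → u = 0)
    (P N : Submodule F A)
    (hNmul : ∀ a ∈ N, ∀ b ∈ N, a * b ∈ N)
    (hPiso : ∀ a ∈ P, ∀ b ∈ P, B a b = 0)
    (hNiso : ∀ a ∈ N, ∀ b ∈ N, B a b = 0)
    (hcompl : IsCompl P N)
    (Filt : ℕ → Set A)
    (hF0 : Filt 0 = {u : A | u ∈ P ∧ ∀ x ∈ N, x * u ∈ N})
    (hFs : ∀ m : ℕ, Filt (m + 1) =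
      {u : A | u ∈ P ∧ ∀ x ∈ N, ∃ y ∈ Filt m, ∃ z ∈ N, x * u = y + z})
    (NFilt : ℕ → Set A)
    (hN0 : NFilt 0 = (N : Set A))
    (hNs : ∀ m : ℕ, NFilt (m + 1) = {u : A | u ∈ N ∧ ∀ y ∈ Filt m, B u y = 0}) :
    ∀ m n : ℕ, ∀ u ∈ Filt (m + n), ∀ v ∈ NFilt n,
      ∃ y ∈ (match m with
              | 0 => (N : Set A)
              | m' + 1 => Filt m'),
        ∃ z ∈ N, u * v = y + z := by
  have hF : PolarizedFiltration.IsFiltration B P N Filt NFilt := ⟨hF0, hFs, hN0, hNs⟩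
  have hB : B.IsRefl := fun u v h => (hsymm v u).trans h
  intro m
  cases m <;>
    exact hF.exists_mul_eq_prevFilt_add hB hnd hassoc hcompl.codisjoint hPiso hNiso hNmul _
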